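/- arXiv:0809.2356 — 7 statements merged into one kernel-verified Lean document; each statement's English description precedes it below -/
import Mathlib

section
/- Let K be an algebraically closed field, V a finite-dimensional K-vector space, and λ ∈ K with λ ≠ 0 and λ ≠ 1. Define a bilinear multiplication on A := K × V by (s, v) · (t, w) := (s·t, s·w + λ·t·v). Then a K-linear map φ : A → A satisfies φ(x·y) = φ(x)·φ(y) for all x, y ∈ A if and only if either φ = 0 or there exists g ∈ End_K(V) with φ(s, v) = (s, g(v)) for all (s,v) ∈ A. Consequently, the monoid End(A) of such multiplicative linear maps under composition is isomorphic to WithZero (End_K(V)), the multiplicative monoid of linear endomorphisms of V with an adjoined absorbing zero. -/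
/-- The endomorphism monoid of the algebra given by a bilinear multiplication `α`. -/
def algEnd (K : Type*) [CommSemiring K] (A : Type*) [AddCommMonoid A] [Module K A]
    (α : A →ₗ[K] A →ₗ[K] A) : Submonoid (Module.End K A) where
  carrier := {φ | ∀ a b : A, φ (α a b) = α (φ a) (φ b)}
  mul_mem' := by
    intro φ ψ hφ hψ a b
    show φ (ψ _) = _
    rw [hψ, hφ]; rfl
  one_mem' := by
    intro a b
    rfl

/-- The bilinear multiplication on `K × V` given by `(s, v) · (t, w) = (s t, s w + λ t v)`. -/
def mulKV (K : Type*) [CommRing K] (V : Type*) [AddCommGroup V] [Module K V] (lam : K) :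
    (K × V) →ₗ[K] (K × V) →ₗ[K] (K × V) :=
  LinearMap.mk₂ K (fun x y => (x.1 * y.1, x.1 • y.2 + (lam * y.1) • x.2))
    (by
      intro m n p
      simp only [Prod.fst_add, Prod.snd_add, Prod.mk_add_mk, Prod.mk.injEq]
      constructor
      · ring
      · module)
    (by
      intro c m p
      simp only [Prod.smul_fst, Prod.smul_snd, Prod.smul_mk, smul_eq_mul, Prod.mk.injEq]
      constructor
      · ring
      · module)
    (by
      intro m n p
      simp only [Prod.fst_add, Prod.snd_add, Prod.mk_add_mk, Prod.mk.injEq]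
      constructor
      · ring
      · module)
    (by
      intro c m p
      simp only [Prod.smul_fst, Prod.smul_snd, Prod.smul_mk, smul_eq_mul, Prod.mk.injEq]
      constructor
      · ring
      · module)

section Aux
variable (K : Type*) [Field K] (V : Type*) [AddCommGroup V] [Module K V] (lam : K)

lemma mulKV_apply (x y : K × V) :
    mulKV K V lam x y = (x.1 * y.1, x.1 • y.2 + (lam * y.1) • x.2) := rfl

/-- diag map (s,v) ↦ (s, g v) -/
def diagKV (g : V →ₗ[K] V) : (K × V) →ₗ[K] (K × V) := LinearMap.prodMap LinearMap.id g

lemma diagKV_apply (g : V →ₗ[K] V) (x : K × V) : diagKV K V g x = (x.1, g x.2) := rfl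

lemma diagKV_mem (g : V →ₗ[K] V) : diagKV K V g ∈ algEnd K (K × V) (mulKV K V lam) := by
  intro a b
  simp [diagKV_apply, mulKV_apply, map_add, map_smul]

lemma zero_mem_algEnd : (0 : Module.End K (K × V)) ∈ algEnd K (K × V) (mulKV K V lam) := by
  intro a b
  simp [mulKV_apply]

lemma diagKV_mul (g h : V →ₗ[K] V) : diagKV K V g * diagKV K V h = diagKV K V (g * h) := by
  ext x <;> simp [diagKV_apply, Module.End.mul_apply]

lemma diagKV_one : diagKV K V (1 : V →ₗ[K] V) = 1 := by
  ext x <;> rfl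
end Aux

/-- The endomorphisms of the algebra `A = K × V` with multiplication
`(s, v) · (t, w) = (s t, s w + λ t v)` (`λ ≠ 0, 1`) are exactly the zero map and the maps
`(s, v) ↦ (s, g v)` for `g` a linear endomorphism of `V`; consequently
`End(A) ≅ WithZero (End V)`. -/
theorem endomorphisms_of_KV
    (K : Type*) [Field K] [IsAlgClosed K] (V : Type*) [AddCommGroup V] [Module K V]
    [FiniteDimensional K V] (lam : K) (h0 : lam ≠ 0) (h1 : lam ≠ 1) :
    (∀ φ : (K × V) →ₗ[K] (K × V),
      (∀ x y, φ (mulKV K V lam x y) = mulKV K V lam (φ x) (φ y)) ↔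
        (φ = 0 ∨ ∃ g : V →ₗ[K] V, ∀ (s : K) (v : V), φ (s, v) = (s, g v))) ∧
    Nonempty (algEnd K (K × V) (mulKV K V lam) ≃* WithZero (Module.End K V)) := by
  have key : ∀ φ : (K × V) →ₗ[K] (K × V),
      (∀ x y, φ (mulKV K V lam x y) = mulKV K V lam (φ x) (φ y)) ↔
        (φ = 0 ∨ ∃ g : V →ₗ[K] V, ∀ (s : K) (v : V), φ (s, v) = (s, g v)) := by
    intro φ
    constructor
    · intro hmul
      have he' : φ ((1 : K), (0 : V)) = mulKV K V lam (φ (1, 0)) (φ (1, 0)) := by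
        have := hmul (1, 0) (1, 0)
        rwa [show mulKV K V lam ((1 : K), (0 : V)) (1, 0) = (1, 0) by
          simp [mulKV_apply]] at this
      by_cases he : φ ((1 : K), (0 : V)) = 0
      · -- φ kills the left identity, hence φ = 0
        left
        refine LinearMap.ext fun x => ?_
        have := hmul (1, 0) x
        rw [show mulKV K V lam ((1 : K), (0 : V)) x = x by
            simp [mulKV_apply], he, map_zero] at this
        simpa using this
      · right
        -- first: φ (1,0) = (1,0)
        set a : K := (φ ((1 : K), (0 : V))).1 with ha
        set u : V := (φ ((1 : K), (0 : V))).2 with hu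
        have hpe : φ ((1 : K), (0 : V)) = (a, u) := rfl
        rw [hpe, mulKV_apply] at he'
        have ha2 : a = a * a := congrArg Prod.fst he'
        have hu2 : u = a • u + (lam * a) • u := congrArg Prod.snd he'
        have haa : a = 1 := by
          rcases mul_eq_zero.mp (show a * (a - 1) = 0 by linear_combination -ha2)
            with h | h
          · exfalso
            apply he
            have hu0 : u = 0 := by simpa [h] using hu2
            rw [hpe, h, hu0]
            rfl
          · exact sub_eq_zero.mp h
        have hU : u = 0 := by
          have h' : u = u + lam • u := by
            have := hu2
            rw [haa] at this
            simpa using this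
          have hlu : lam • u = 0 := left_eq_add.mp h'
          rcases smul_eq_zero.mp hlu with h | h
          · exact absurd h h0
          · exact h
        have he1 : φ ((1 : K), (0 : V)) = (1, 0) := by rw [hpe, haa, hU]
        -- second: first component of φ (0,v) is zero
        have hc : ∀ v : V, (φ ((0 : K), v)).1 = 0 := by
          intro v
          have := hmul (0, v) (0, v)
          rw [show mulKV K V lam ((0 : K), v) (0, v) = 0 by simp [mulKV_apply]] at this
          have h1' : (0 : K) = (φ ((0 : K), v)).1 * (φ ((0 : K), v)).1 := by
            have := congrArg Prod.fst this
            simpa [mulKV_apply] using this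
          exact mul_self_eq_zero.mp h1'.symm
        refine ⟨(LinearMap.snd K K V).comp (φ.comp (LinearMap.inr K K V)), fun s v => ?_⟩
        have hsv : ((s : K), v) = s • ((1 : K), (0 : V)) + ((0 : K), v) := by simp
        rw [hsv, map_add, map_smul, he1]
        have h0v : φ ((0 : K), v) = (0, (φ ((0 : K), v)).2) :=
          Prod.ext (hc v) rfl
        rw [h0v]
        simp
    · rintro (rfl | ⟨g, hg⟩) x y
      · simp [mulKV_apply]
      · have hx : (x.1, x.2) = x := rfl
        have hy : (y.1, y.2) = y := rfl
        rw [← hx, ← hy, hg, hg, mulKV_apply, mulKV_apply, hg]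
        simp [map_add, map_smul]
  refine ⟨key, ?_⟩
  -- build the monoid isomorphism
  let F : WithZero (Module.End K V) →* algEnd K (K × V) (mulKV K V lam) :=
    { toFun := fun x => Option.elim x ⟨0, zero_mem_algEnd K V lam⟩
        (fun g => ⟨diagKV K V g, diagKV_mem K V lam g⟩)
      map_one' := by
        show (⟨diagKV K V 1, _⟩ : algEnd K (K × V) (mulKV K V lam)) = 1
        exact Subtype.ext (diagKV_one K V)
      map_mul' := by
        rintro (_ | g) (_ | h)
        · rfl
        · rfl
        · show _ = (⟨diagKV K V g * 0, _⟩ : algEnd K (K × V) (mulKV K V lam))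
          exact Subtype.ext (mul_zero _).symm
        · show (⟨diagKV K V (g * h), _⟩ : algEnd K (K × V) (mulKV K V lam)) = _
          exact Subtype.ext (diagKV_mul K V g h).symm }
  have hinj : Function.Injective F := by
    rintro (_ | g) (_ | h) hFx
    · rfl
    · exfalso
      have h' : (0 : Module.End K (K × V)) = diagKV K V h := Subtype.ext_iff.mp hFx
      have := congrArg (fun ψ : Module.End K (K × V) => (ψ ((1 : K), (0 : V))).1) h'
      simp [diagKV_apply] at this
    · exfalso
      have h' : diagKV K V g = (0 : Module.End K (K × V)) := Subtype.ext_iff.mp hFx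
      have := congrArg (fun ψ : Module.End K (K × V) => (ψ ((1 : K), (0 : V))).1) h'
      simp [diagKV_apply] at this
    · have hgh : diagKV K V g = diagKV K V h := Subtype.ext_iff.mp hFx
      congr 1
      ext v
      have := congrArg (fun ψ : Module.End K (K × V) => (ψ ((0 : K), v)).2) hgh
      simpa [diagKV_apply] using this
  have hsurj : Function.Surjective F := by
    rintro ⟨φ, hφ⟩
    rcases (key φ).mp hφ with rfl | ⟨g, hg⟩
    · exact ⟨none, rfl⟩
    · refine ⟨some g, Subtype.ext ?_⟩
      show diagKV K V g = φ
      refine LinearMap.ext fun x => ?_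
      rw [diagKV_apply]
      exact (hg x.1 x.2).symm
  exact ⟨(MulEquiv.ofBijective F ⟨hinj, hsurj⟩).symm⟩
end

section
/- Let K be an algebraically closed field with char K ≠ 2 and V a 2-dimensional K-vector space. Consider the exterior algebra Λ(V) = K ⊕ V ⊕ Λ²(V), where Λ²(V) is the 1-dimensional top exterior power. Then a K-linear map φ : Λ(V) → Λ(V) satisfies φ(x·y) = φ(x)·φ(y) for all x, y ∈ Λ(V) (where · is the wedge product) if and only if either φ = 0, or the following hold: φ(1) = 1, and there exist g ∈ End_K(V) and a K-linear map c : V → Λ²(V) such that φ(v) = g(v) + c(v) for all v ∈ V and φ(ω) = (det g)·ω for all ω ∈ Λ²(V), where det g denotes the determinant of the linear endomorphism g. -/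
/-!
Since `Λ³V = 0`, every element of `Λ(V)` is `a + ι u + w` with `w ∈ Λ²V`, and the kernel of the
augmentation `Λ(V) → K` squares to zero. Hence a multiplicative `φ` sends `1` to an idempotent,
which is `0` or `1`. In the unital case `φ (ι v)` squares to zero, so it has no scalar part and
splits as `ι (g v) + c v`; products of two such elements only see the `ι`-parts, and
`ι (g x) * ι (g y) = det g • (ι x * ι y)` because both sides are alternating in `(x, y)`.
Conversely, `v ↦ ι (g v) + c v` squares to zero, so it lifts to an algebra endomorphism, which
agrees with `φ` on `1`, `ι v` and `ι x * ι y`; these span `Λ(V)`.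
-/

open Module

theorem AlternatingMap.eq_smulRight_basis_det {R M N ι : Type*} [CommRing R] [AddCommGroup M]
    [Module R M] [AddCommGroup N] [Module R N] [Fintype ι] [DecidableEq ι]
    (e : Basis ι R M) (f : M [⋀^ι]→ₗ[R] N) : f = e.det.smulRight (f e) := by
  refine Basis.ext_alternating e fun i h => ?_
  let σ : Equiv.Perm ι := Equiv.ofBijective i (Finite.injective_iff_bijective.1 h)
  change f (e ∘ σ) = e.det.smulRight (f e) (e ∘ σ)
  simp [AlternatingMap.map_perm, Basis.det_self]

namespace ExteriorAlgebra

variable {K V : Type*} [Field K] [AddCommGroup V] [Module K V]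

theorem ιMulti_two_apply (v : Fin 2 → V) : ιMulti K 2 v = ι K (v 0) * ι K (v 1) := by
  simp [ιMulti_apply, Matrix.vecTail]

theorem algebraMapInv_ι (x : V) : algebraMapInv (ι K x) = 0 := by
  simp [algebraMapInv]

theorem ιInv_algebraMap (r : K) : ιInv (algebraMap K (ExteriorAlgebra K V) r) = 0 := by
  simp [ιInv, TrivSqZeroExt.algebraMap_eq_inl]

theorem ιInv_one : ιInv (1 : ExteriorAlgebra K V) = 0 := by
  simpa using ιInv_algebraMap (V := V) (1 : K)

theorem ιInv_ι_mul_ι (x y : V) : ιInv (ι K x * ι K y) = 0 := by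
  simp [ιInv]

theorem ι_mem_exteriorPower_one (x : V) : ι K x ∈ ⋀[K]^1 V := by
  rw [exteriorPower, pow_one]
  exact LinearMap.mem_range_self _ x

theorem ι_mul_ι_mem_exteriorPower_two (x y : V) : ι K x * ι K y ∈ ⋀[K]^2 V := by
  simpa [ιMulti_two_apply] using ιMulti_range K 2 ⟨![x, y], rfl⟩

theorem algebraMapInv_eq_zero_of_mul_self_eq_zero {x : ExteriorAlgebra K V} (hx : x * x = 0) :
    algebraMapInv x = 0 :=
  mul_self_eq_zero.mp (by rw [← map_mul, hx, map_zero])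

theorem eq_smul_on_exteriorPower_two {f : ExteriorAlgebra K V →ₗ[K] ExteriorAlgebra K V} {r : K}
    (h : ∀ x y, f (ι K x * ι K y) = r • (ι K x * ι K y)) : ∀ ω ∈ ⋀[K]^2 V, f ω = r • ω := by
  suffices ⋀[K]^2 V ≤ LinearMap.ker (f - r • LinearMap.id) by
    intro ω hω
    simpa [sub_eq_zero] using this hω
  rw [← ιMulti_span_fixedDegree, Submodule.span_le]
  rintro _ ⟨v, rfl⟩
  rw [SetLike.mem_coe, LinearMap.mem_ker, ιMulti_two_apply]
  simp [h]

section FiniteDimensional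

variable [FiniteDimensional K V]

theorem ιMulti_eq_zero_of_finrank_lt {n : ℕ} (hn : finrank K V < n) (v : Fin n → V) :
    ιMulti K n v = 0 :=
  (ιMulti K n).map_linearDependent v fun hv =>
    hn.not_ge (by simpa using hv.fintype_card_le_finrank)

theorem exteriorPower_eq_bot_of_finrank_lt {n : ℕ} (hn : finrank K V < n) : ⋀[K]^n V = ⊥ := by
  rw [← ιMulti_span_fixedDegree, Submodule.span_eq_bot]
  rintro _ ⟨v, rfl⟩
  exact ιMulti_eq_zero_of_finrank_lt hn v

theorem mul_eq_zero_of_finrank_lt {i j : ℕ} {x y : ExteriorAlgebra K V}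
    (hij : finrank K V < i + j) (hx : x ∈ ⋀[K]^i V) (hy : y ∈ ⋀[K]^j V) : x * y = 0 := by
  have hxy : x * y ∈ ⋀[K]^(i + j) V := SetLike.mul_mem_graded hx hy
  rwa [exteriorPower_eq_bot_of_finrank_lt hij, Submodule.mem_bot] at hxy

section FinrankLeTwo

variable (hV : finrank K V ≤ 2)
include hV

theorem linearMap_ext_of_finrank_le_two {N : Type*} [AddCommGroup N] [Module K N]
    {f f' : ExteriorAlgebra K V →ₗ[K] N} (h₀ : f 1 = f' 1) (h₁ : ∀ v, f (ι K v) = f' (ι K v))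
    (h₂ : ∀ x y, f (ι K x * ι K y) = f' (ι K x * ι K y)) : f = f' := by
  refine LinearMap.ext_on_range (ιMulti_span K V) ?_
  rintro ⟨n, v⟩
  match n, v with
  | 0, v => simpa [ιMulti_zero_apply] using h₀
  | 1, v => simpa [ιMulti_apply] using h₁ (v 0)
  | 2, v => rw [ιMulti_two_apply]; exact h₂ (v 0) (v 1)
  | n + 3, v => simp [ιMulti_eq_zero_of_finrank_lt (K := K) (by omega) v]

theorem sub_algebraMap_sub_ι_mem_exteriorPower_two (x : ExteriorAlgebra K V) :
    x - algebraMap K _ (algebraMapInv x) - ι K (ιInv x) ∈ ⋀[K]^2 V := by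
  let P : ExteriorAlgebra K V →ₗ[K] ExteriorAlgebra K V :=
    LinearMap.id - Algebra.linearMap K _ ∘ₗ algebraMapInv.toLinearMap - ι K ∘ₗ ιInv
  suffices ⊤ ≤ (⋀[K]^2 V).comap P from this Submodule.mem_top
  rw [← ιMulti_span K V, Submodule.span_le]
  rintro _ ⟨⟨n, v⟩, rfl⟩
  match n, v with
  | 0, v => simp [P, ιMulti_zero_apply, ιInv_one]
  | 1, v => simp [P, ιMulti_apply, algebraMapInv_ι, ι_leftInverse (R := K) (v 0)]
  | 2, v =>
    change P (ιMulti K 2 v) ∈ ⋀[K]^2 V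
    rw [ιMulti_two_apply]
    simpa [P, algebraMapInv_ι, ιInv_ι_mul_ι] using ι_mul_ι_mem_exteriorPower_two (v 0) (v 1)
  | n + 3, v => simp [P, ιMulti_eq_zero_of_finrank_lt (K := K) (by omega) v]

theorem sub_ι_ιInv_mem_exteriorPower_two {x : ExteriorAlgebra K V}
    (hx : algebraMapInv x = 0) : x - ι K (ιInv x) ∈ ⋀[K]^2 V := by
  simpa [hx] using sub_algebraMap_sub_ι_mem_exteriorPower_two hV x

theorem ι_add_mul_ι_add (u u' : V) {w w' : ExteriorAlgebra K V} (hw : w ∈ ⋀[K]^2 V)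
    (hw' : w' ∈ ⋀[K]^2 V) : (ι K u + w) * (ι K u' + w') = ι K u * ι K u' := by
  rw [add_mul, mul_add, mul_add,
    mul_eq_zero_of_finrank_lt (by omega) (ι_mem_exteriorPower_one u) hw',
    mul_eq_zero_of_finrank_lt (by omega) hw (ι_mem_exteriorPower_one u'),
    mul_eq_zero_of_finrank_lt (by omega) hw hw', add_zero, add_zero, add_zero]

theorem mul_self_eq_zero_of_algebraMapInv_eq_zero {x : ExteriorAlgebra K V}
    (hx : algebraMapInv x = 0) : x * x = 0 := by
  have hw := sub_ι_ιInv_mem_exteriorPower_two hV hx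
  calc x * x = (ι K (ιInv x) + (x - ι K (ιInv x))) * (ι K (ιInv x) + (x - ι K (ιInv x))) := by
        rw [add_sub_cancel]
    _ = 0 := by rw [ι_add_mul_ι_add hV _ _ hw hw, ι_sq_zero]

theorem eq_zero_or_eq_one_of_isIdempotentElem {e : ExteriorAlgebra K V}
    (he : IsIdempotentElem e) : e = 0 ∨ e = 1 := by
  have hzero {f : ExteriorAlgebra K V} (hf : IsIdempotentElem f) (h : algebraMapInv f = 0) :
      f = 0 :=
    hf.symm.trans (mul_self_eq_zero_of_algebraMapInv_eq_zero hV h)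
  rcases IsIdempotentElem.iff_eq_zero_or_one.mp (he.map algebraMapInv) with h | h
  · exact .inl (hzero he h)
  · exact .inr (sub_eq_zero.mp (hzero he.one_sub (by rw [map_sub, map_one, h, sub_self]))).symm

end FinrankLeTwo

section FinrankEqTwo

variable (hV : finrank K V = 2)
include hV

theorem ι_mul_ι_map_eq_det_smul (g : V →ₗ[K] V) (x y : V) :
    ι K (g x) * ι K (g y) = LinearMap.det g • (ι K x * ι K y) := by
  let b := finBasisOfFinrankEq K V hV
  have hdet := (ιMulti K 2 (M := V)).eq_smulRight_basis_det b
  have hgxy := congrArg (fun f => f (g ∘ ![x, y])) hdet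
  have hxy := congrArg (fun f => f ![x, y]) hdet
  simp only [AlternatingMap.smulRight_apply, Basis.det_comp, ιMulti_two_apply] at hgxy hxy
  simp only [Function.comp_apply, Matrix.cons_val_zero, Matrix.cons_val_one] at hgxy hxy
  rw [hgxy, hxy, mul_smul]

theorem ι_add_mul_ι_add_eq_det_smul (g : V →ₗ[K] V) (c : V →ₗ[K] ⋀[K]^2 V) (x y : V) :
    (ι K (g x) + (c x : ExteriorAlgebra K V)) * (ι K (g y) + c y) =
      LinearMap.det g • (ι K x * ι K y) := by
  rw [ι_add_mul_ι_add hV.le _ _ (c x).2 (c y).2, ι_mul_ι_map_eq_det_smul hV]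

theorem exists_ι_add_of_map_mul {φ : ExteriorAlgebra K V →ₗ[K] ExteriorAlgebra K V}
    (hmul : ∀ x y, φ (x * y) = φ x * φ y) :
    ∃ (g : V →ₗ[K] V) (c : V →ₗ[K] ⋀[K]^2 V),
      (∀ v, φ (ι K v) = ι K (g v) + (c v : ExteriorAlgebra K V)) ∧
      ∀ ω ∈ ⋀[K]^2 V, φ ω = LinearMap.det g • ω := by
  let g : V →ₗ[K] V := ιInv ∘ₗ φ ∘ₗ ι K
  let c : V →ₗ[K] ⋀[K]^2 V := ((LinearMap.id - ι K ∘ₗ ιInv) ∘ₗ φ ∘ₗ ι K).codRestrict _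
    fun v => sub_ι_ιInv_mem_exteriorPower_two hV.le <|
      algebraMapInv_eq_zero_of_mul_self_eq_zero
        (by rw [LinearMap.comp_apply, ← hmul, ι_sq_zero, map_zero])
  have hφι (v : V) : φ (ι K v) = ι K (g v) + (c v : ExteriorAlgebra K V) :=
    (add_sub_cancel _ _).symm
  refine ⟨g, c, hφι, eq_smul_on_exteriorPower_two fun x y => ?_⟩
  rw [hmul, hφι, hφι, ι_add_mul_ι_add_eq_det_smul hV]

theorem map_mul_of_eq_ι_add {φ : ExteriorAlgebra K V →ₗ[K] ExteriorAlgebra K V}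
    {g : V →ₗ[K] V} {c : V →ₗ[K] ⋀[K]^2 V} (h1 : φ 1 = 1)
    (hφι : ∀ v, φ (ι K v) = ι K (g v) + (c v : ExteriorAlgebra K V))
    (hφω : ∀ ω ∈ ⋀[K]^2 V, φ ω = LinearMap.det g • ω) (x y : ExteriorAlgebra K V) :
    φ (x * y) = φ x * φ y := by
  let f : V →ₗ[K] ExteriorAlgebra K V := ι K ∘ₗ g + (⋀[K]^2 V).subtype ∘ₗ c
  have hf (x y : V) : f x * f y = LinearMap.det g • (ι K x * ι K y) :=
    ι_add_mul_ι_add_eq_det_smul hV g c x y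
  let F := lift K ⟨f, fun v => by rw [hf, ι_sq_zero, smul_zero]⟩
  have hφF : φ = F.toLinearMap := linearMap_ext_of_finrank_le_two hV.le
    (by rw [h1, AlgHom.toLinearMap_apply, map_one])
    (fun v => by rw [hφι, AlgHom.toLinearMap_apply, lift_ι_apply]; rfl)
    (fun x y => by
      rw [hφω _ (ι_mul_ι_mem_exteriorPower_two x y), AlgHom.toLinearMap_apply, map_mul,
        lift_ι_apply, lift_ι_apply, hf])
  rw [hφF]
  exact map_mul F x y

end FinrankEqTwo

end FiniteDimensional

end ExteriorAlgebra

open ExteriorAlgebra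

theorem exteriorAlgebra_endomorphisms_general
    (K : Type*) [Field K]
    (V : Type*) [AddCommGroup V] [Module K V] [FiniteDimensional K V]
    (hdim : Module.finrank K V = 2)
    (φ : ExteriorAlgebra K V →ₗ[K] ExteriorAlgebra K V) :
    (∀ x y : ExteriorAlgebra K V, φ (x * y) = φ x * φ y) ↔
      (φ = 0 ∨
        (φ 1 = 1 ∧
          ∃ (g : V →ₗ[K] V) (c : V →ₗ[K] ↥(⋀[K]^2 V)),
            (∀ v : V, φ (ι K v) = ι K (g v) + (c v : ExteriorAlgebra K V)) ∧
            (∀ ω ∈ ⋀[K]^2 V, φ ω = LinearMap.det g • ω))) := by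
  constructor
  · intro hmul
    have hφ1 : IsIdempotentElem (φ 1) := by rw [IsIdempotentElem, ← hmul, one_mul]
    rcases eq_zero_or_eq_one_of_isIdempotentElem hdim.le hφ1 with h1 | h1
    · exact .inl (LinearMap.ext fun x => by rw [← one_mul x, hmul, h1, zero_mul, one_mul]; rfl)
    · exact .inr ⟨h1, exists_ι_add_of_map_mul hdim hmul⟩
  · rintro (rfl | ⟨h1, g, c, hφι, hφω⟩)
    · simp
    · exact map_mul_of_eq_ι_add hdim h1 hφι hφω

/-- Endomorphisms of the exterior algebra of a 2-dimensional space `V` over an algebraically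
closed field of characteristic `≠ 2`: a linear map `φ` of `Λ(V)` is multiplicative iff it is
zero, or it fixes `1`, maps `v ∈ V` to `g v + c v` with `g` a linear endomorphism of `V` and
`c : V → Λ²(V)` linear, and acts on `Λ²(V)` as multiplication by `det g`. -/
theorem exteriorAlgebra_endomorphisms
    (K : Type*) [Field K] [IsAlgClosed K] (hchar : ringChar K ≠ 2)
    (V : Type*) [AddCommGroup V] [Module K V] [FiniteDimensional K V]
    (hdim : Module.finrank K V = 2)
    (φ : ExteriorAlgebra K V →ₗ[K] ExteriorAlgebra K V) :
    (∀ x y : ExteriorAlgebra K V, φ (x * y) = φ x * φ y) ↔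
      (φ = 0 ∨
        (φ 1 = 1 ∧
          ∃ (g : V →ₗ[K] V) (c : V →ₗ[K] ↥(⋀[K]^2 V)),
            (∀ v : V, φ (ι K v) = ι K (g v) + (c v : ExteriorAlgebra K V)) ∧
            (∀ ω ∈ ⋀[K]^2 V, φ ω = LinearMap.det g • ω))) :=
  exteriorAlgebra_endomorphisms_general K V hdim φ
end

section
/- Let K be a field and A a K-algebra (a K-vector space with bilinear multiplication, not assumed associative or commutative) possessing a left identity e (e·a = a for all a ∈ A). Suppose A decomposes as a direct sum of subspaces A = ⟨e⟩ ⊕ A₁ ⊕ ⋯ ⊕ A_r, where for each i the subspace A_i is exactly the eigenspace of the linear operator x ↦ x·e (right multiplication by e) for an eigenvalue α_i ∈ K with α_i ≠ 0 and α_i ≠ 1. Suppose moreover that 0 and e are the only idempotents of A (elements x with x·x = x). Then: (i) e is the unique left identity of A; (ii) every endomorphism σ of A (K-linear map with σ(x·y)=σ(x)·σ(y)) satisfies either σ = 0, or σ(e) = e and σ(A_i) ⊆ A_i for every i = 1, …, r. -/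
/-- Let `A` be a (not necessarily associative) algebra over `K` with bilinear multiplication `μ`
and a left identity `e`, decomposing as the internal direct sum of the line `⟨e⟩` and subspaces
`A₁, …, A_r`, where each `A_i` is exactly the eigenspace of right multiplication by `e` for an
eigenvalue `α_i ∉ {0, 1}`. If `0` and `e` are the only idempotents of `A`, then (i) `e` is the
unique left identity, and (ii) every endomorphism `σ` of `A` is either zero, or fixes `e` and
preserves each `A_i`. -/
theorem left_identity_eigenspace_decomposition
    (K : Type*) [Field K] (A : Type*) [AddCommGroup A] [Module K A]
    (μ : A →ₗ[K] A →ₗ[K] A) (e : A) (he : ∀ a : A, μ e a = a)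
    (r : ℕ) (Asub : Fin r → Submodule K A) (α : Fin r → K)
    (hα0 : ∀ i, α i ≠ 0) (hα1 : ∀ i, α i ≠ 1)
    (heig : ∀ i, Asub i = Module.End.eigenspace (μ.flip e) (α i))
    (hdec : DirectSum.IsInternal (fun o : Option (Fin r) =>
      Option.elim o (K ∙ e) Asub))
    (hidem : ∀ x : A, μ x x = x → x = 0 ∨ x = e) :
    (∀ e' : A, (∀ a : A, μ e' a = a) → e' = e) ∧
    (∀ σ : A →ₗ[K] A, (∀ x y : A, σ (μ x y) = μ (σ x) (σ y)) →
      σ = 0 ∨ (σ e = e ∧ ∀ i, (Asub i).map σ ≤ Asub i)) := by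
  constructor
  · intro e' he'
    rcases hidem e' (he' e') with h | h
    · have h0 : e = 0 := by
        have := he' e
        rw [h] at this
        simpa using this.symm
      rw [h, h0]
    · exact h
  · intro σ hσ
    have hi : μ (σ e) (σ e) = σ e := by rw [← hσ, he e]
    rcases hidem _ hi with h0 | h1
    · left
      ext a
      have := hσ e a
      rw [he, h0] at this
      simpa using this
    · right
      refine ⟨h1, fun i => ?_⟩
      rintro y ⟨x, hx, rfl⟩
      rw [heig] at hx ⊢
      have hx' : μ x e = α i • x := Module.End.mem_eigenspace_iff.mp hx
      refine Module.End.mem_eigenspace_iff.mpr ?_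
      show μ (σ x) e = α i • σ x
      rw [← h1, ← hσ, hx', map_smul]
end

section
/- Let K be an algebraically closed field, P a 2-dimensional K-vector space with basis {p₁, p₂}, U a nonzero finite-dimensional K-vector space, V := P ⊕ U, r > 1 an integer, S a linear subspace of V^{⊗r}, and γ = (γ₁, …, γ₆) a tuple of six pairwise distinct elements of K ∖ {0, 1}. Let D := ⟨e⟩ ⊕ ⟨b⟩ ⊕ ⟨c⟩ ⊕ ⟨d⟩ ⊕ A(V,S) be the algebra with multiplication determined by conditions (D1)–(D4) below. Then the only idempotents of D (elements x with x·x = x) are 0 and e. -/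
/-!
Write an idempotent as `x = t e + β b + κ c + δ d + a` with `a ∈ A(V, S)`. If `κ ≠ 0`, the
`c`-coordinate of `x * x = x` gives `t (1 + γ₂) = 1`, the `e`- and `d`-coordinates then give
`κ = t (γ₂ - γ₃)`, and with this value of `κ` the `b`-coordinate collapses to `κ² = 0`. So `κ = 0`,
hence `t² = t` and `β = δ = 0`. The `A(V, S)`-coordinate becomes `a² = a` when `t = 0`, and
`γ₆ a + (γ₄ - γ₆) a_P + (γ₅ - γ₆) a_U + a² = 0` when `t = 1`, whose degree-one part shows that `a`
has no degree-one component. Finally an element `a` without degree-one component with `a = s a²`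
is zero: each substitution doubles its lowest degree, and `A(V, S)` vanishes above degree `r`.
-/

open scoped TensorProduct DirectSum

noncomputable section
set_option maxSynthPendingDepth 2

variable (K V : Type*) [Field K] [AddCommGroup V] [Module K V]

theorem mul_comp_eq_zero {a b : ℕ} {x y : ⨁ n : ℕ, ⨂[K]^n V}
    (hx : ∀ i < a, x i = 0) (hy : ∀ j < b, y j = 0) {k : ℕ} (hk : k < a + b) :
    (x * y) k = 0 := by
  classical
  rw [DirectSum.mul_eq_dfinsuppSum, DFinsupp.sum_apply, DFinsupp.sum]
  apply Finset.sum_eq_zero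
  intro i hi
  rw [DFinsupp.sum_apply, DFinsupp.sum]
  apply Finset.sum_eq_zero
  intro j hj
  have hi' : a ≤ i := by
    by_contra h
    exact (DFinsupp.mem_support_iff.mp hi) (hx i (by omega))
  have hj' : b ≤ j := by
    by_contra h
    exact (DFinsupp.mem_support_iff.mp hj) (hy j (by omega))
  exact DirectSum.of_eq_of_ne _ _ _ (by omega)

/-- The positive-degree part `T(V)₊ = ⊕_{i ≥ 1} V^{⊗i}` of the tensor algebra. -/
def Tplus : Submodule K (⨁ n : ℕ, ⨂[K]^n V) :=
  LinearMap.ker (DirectSum.component K ℕ (fun n => ⨂[K]^n V) 0)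

theorem mem_Tplus_iff (x : ⨁ n : ℕ, ⨂[K]^n V) : x ∈ Tplus K V ↔ x 0 = 0 :=
  Iff.rfl

theorem mul_mem_Tplus (x y : ⨁ n : ℕ, ⨂[K]^n V)
    (hx : x ∈ Tplus K V) : x * y ∈ Tplus K V := by
  rw [mem_Tplus_iff] at *
  exact mul_comp_eq_zero K V (a := 1) (b := 0)
    (fun i hi => by interval_cases i; exact hx) (fun j hj => by omega) (by omega)


theorem mul_mem_Tplus' (x y : ⨁ n : ℕ, ⨂[K]^n V)
    (hy : y ∈ Tplus K V) : x * y ∈ Tplus K V := by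
  rw [mem_Tplus_iff] at *
  exact mul_comp_eq_zero K V (a := 0) (b := 1)
    (fun i hi => by omega) (fun j hj => by interval_cases j; exact hy) (by omega)

/-- The multiplication of `T(V)₊`, as a bilinear map. -/
def mulTplus : ↥(Tplus K V) →ₗ[K] ↥(Tplus K V) →ₗ[K] ↥(Tplus K V) :=
  LinearMap.mk₂ K (fun x y => ⟨x.1 * y.1, mul_mem_Tplus K V x.1 y.1 x.2⟩)
    (fun m n p => Subtype.ext (by push_cast; exact add_mul _ _ _))
    (fun c m p => Subtype.ext (by push_cast; exact smul_mul_assoc c _ _))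
    (fun m n p => Subtype.ext (by push_cast; exact mul_add _ _ _))
    (fun c m p => Subtype.ext (by push_cast; exact mul_smul_comm c _ _))

variable (r : ℕ) (S : Submodule K (⨂[K]^r V))

/-- The ideal `I(S) = S ⊕ (⊕_{i > r} V^{⊗i})` of `T(V)₊`, as a submodule of `T(V)₊`. -/
def Imod : Submodule K ↥(Tplus K V) where
  carrier := {x | x.1 r ∈ S ∧ ∀ i < r, x.1 i = 0}
  add_mem' := by
    rintro x y ⟨hxr, hx⟩ ⟨hyr, hy⟩
    refine ⟨?_, fun i hi => ?_⟩
    · show (x.1 + y.1) r ∈ S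
      rw [DirectSum.add_apply]
      exact S.add_mem hxr hyr
    · show (x.1 + y.1) i = 0
      rw [DirectSum.add_apply, hx i hi, hy i hi, add_zero]
  zero_mem' := ⟨by simp, fun i hi => by simp⟩
  smul_mem' := by
    rintro c x ⟨hxr, hx⟩
    refine ⟨?_, fun i hi => ?_⟩
    · show (c • x.1) r ∈ S
      rw [DFinsupp.smul_apply]
      exact S.smul_mem c hxr
    · show (c • x.1) i = 0
      rw [DFinsupp.smul_apply, hx i hi, smul_zero]

/-- The algebra `A(V, S) = T(V)₊ / I(S)`, as a vector space. -/
abbrev AVS := ↥(Tplus K V) ⧸ (Imod K V r S)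

theorem left_absorb (_hr : 1 < r) (x : ↥(Tplus K V)) (hx : x ∈ Imod K V r S)
    (y : ↥(Tplus K V)) : mulTplus K V x y ∈ Imod K V r S := by
  obtain ⟨hxr, hx'⟩ := hx
  have h : ∀ k < r + 1, (x.1 * y.1) k = 0 :=
    fun k hk => mul_comp_eq_zero K V (a := r) (b := 1) hx'
      (fun j hj => by interval_cases j; exact y.2) hk
  exact ⟨by rw [show (mulTplus K V x y).1 = x.1 * y.1 from rfl, h r (by omega)]; exact S.zero_mem,
    fun i hi => by rw [show (mulTplus K V x y).1 = x.1 * y.1 from rfl, h i (by omega)]⟩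

theorem right_absorb (_hr : 1 < r) (x : ↥(Tplus K V)) (y : ↥(Tplus K V))
    (hy : y ∈ Imod K V r S) : mulTplus K V x y ∈ Imod K V r S := by
  obtain ⟨hyr, hy'⟩ := hy
  have h : ∀ k < r + 1, (x.1 * y.1) k = 0 := fun k hk =>
    mul_comp_eq_zero K V (a := 1) (b := r)
      (fun j hj => by interval_cases j; exact x.2) hy' (by omega)
  exact ⟨by rw [show (mulTplus K V x y).1 = x.1 * y.1 from rfl, h r (by omega)]; exact S.zero_mem,
    fun i hi => by rw [show (mulTplus K V x y).1 = x.1 * y.1 from rfl, h i (by omega)]⟩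


theorem hker1 (hr : 1 < r) :
    Imod K V r S ≤ LinearMap.ker ((mulTplus K V).compr₂ (Imod K V r S).mkQ) := by
  intro x hx
  rw [LinearMap.mem_ker]
  ext y
  simp only [LinearMap.compr₂_apply, LinearMap.zero_apply, Submodule.mkQ_apply,
    Submodule.Quotient.mk_eq_zero]
  exact left_absorb K V r S hr x hx y

/-- Partially descended multiplication. -/
def mulQ1 (hr : 1 < r) : AVS K V r S →ₗ[K] ↥(Tplus K V) →ₗ[K] AVS K V r S :=
  (Imod K V r S).liftQ ((mulTplus K V).compr₂ (Imod K V r S).mkQ) (hker1 K V r S hr)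

theorem hker2 (hr : 1 < r) :
    Imod K V r S ≤ LinearMap.ker (mulQ1 K V r S hr).flip := by
  intro y hy
  rw [LinearMap.mem_ker]
  ext x
  show mulQ1 K V r S hr (Submodule.Quotient.mk x) y = 0
  rw [mulQ1, Submodule.liftQ_apply]
  simp only [LinearMap.compr₂_apply, Submodule.mkQ_apply, Submodule.Quotient.mk_eq_zero]
  exact right_absorb K V r S hr x y hy

/-- The multiplication of the algebra `A(V, S)`, as a bilinear map. -/
def mulAVS (hr : 1 < r) : AVS K V r S →ₗ[K] AVS K V r S →ₗ[K] AVS K V r S :=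
  ((Imod K V r S).liftQ (mulQ1 K V r S hr).flip (hker2 K V r S hr)).flip

theorem mulAVS_mk (hr : 1 < r) (x y : ↥(Tplus K V)) :
    mulAVS K V r S hr (Submodule.Quotient.mk x) (Submodule.Quotient.mk y) =
      Submodule.Quotient.mk (mulTplus K V x y) := by
  rw [mulAVS]
  simp only [LinearMap.flip_apply, Submodule.liftQ_apply, mulQ1, LinearMap.compr₂_apply,
    Submodule.mkQ_apply]

/-- The canonical linear embedding `V → T(V)₊` in degree `1`. -/
def iotaTplus : V →ₗ[K] ↥(Tplus K V) :=
  LinearMap.codRestrict (Tplus K V)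
    ((DirectSum.lof K ℕ (fun n => ⨂[K]^n V) 1) ∘ₗ
      (PiTensorProduct.subsingletonEquiv (s := fun _ : Fin 1 => V) (0 : Fin 1)).symm.toLinearMap)
    (fun v => by
      rw [mem_Tplus_iff]
      exact DirectSum.of_eq_of_ne _ _ _ (by omega))

/-- The canonical map `V → A(V, S)` (injective since `1 < r`). -/
def iotaAVS : V →ₗ[K] AVS K V r S :=
  (Imod K V r S).mkQ ∘ₗ iotaTplus K V


/-- The projection of `A(V, S)` onto its degree-one component `V` (defined for `1 < r`). -/
def piV (hr : 1 < r) : AVS K V r S →ₗ[K] V :=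
  (Imod K V r S).liftQ
    ((PiTensorProduct.subsingletonEquiv (0 : Fin 1)).toLinearMap ∘ₗ
      (DirectSum.component K ℕ (fun n => ⨂[K]^n V) 1) ∘ₗ (Tplus K V).subtype)
    (by
      intro x hx
      rw [LinearMap.mem_ker]
      show (PiTensorProduct.subsingletonEquiv (0 : Fin 1)) (x.1 1) = 0
      rw [hx.2 1 hr, map_zero])

end

noncomputable section
set_option maxSynthPendingDepth 2

variable (K P U : Type*) [Field K] [AddCommGroup P] [Module K P]
  [AddCommGroup U] [Module K U]
variable (r : ℕ) (S : Submodule K (⨂[K]^r (P × U))) (hr : 1 < r)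

/-- The underlying vector space of the algebra `D = ⟨e⟩ ⊕ ⟨b⟩ ⊕ ⟨c⟩ ⊕ ⟨d⟩ ⊕ A(V,S)`,
where `V = P ⊕ U`; the four scalar coordinates are those of `e`, `b`, `c`, `d`. -/
abbrev Dspace := K × K × K × K × AVS K (P × U) r S

/-- The canonical map `P → A(V, S)`, `V = P ⊕ U`. -/
def iotaP : P →ₗ[K] AVS K (P × U) r S :=
  iotaAVS K (P × U) r S ∘ₗ LinearMap.inl K P U

/-- The canonical map `U → A(V, S)`, `V = P ⊕ U`. -/
def iotaU : U →ₗ[K] AVS K (P × U) r S :=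
  iotaAVS K (P × U) r S ∘ₗ LinearMap.inr K P U

/-- The `P`-component of the degree-one part of an element of `A(V, S)`, as an element
of `A(V, S)`. -/
def aP (hr : 1 < r) : AVS K (P × U) r S →ₗ[K] AVS K (P × U) r S :=
  iotaP K P U r S ∘ₗ LinearMap.fst K P U ∘ₗ piV K (P × U) r S hr

/-- The `U`-component of the degree-one part of an element of `A(V, S)`, as an element
of `A(V, S)`. -/
def aU (hr : 1 < r) : AVS K (P × U) r S →ₗ[K] AVS K (P × U) r S :=
  iotaU K P U r S ∘ₗ LinearMap.snd K P U ∘ₗ piV K (P × U) r S hr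

variable (p1 p2 : P) (gam : Fin 6 → K)

set_option maxHeartbeats 2000000 in
/-- The multiplication of the algebra `D(P, U, S, γ)`, determined by the conditions
(D1)–(D4): `e` (the first coordinate) is a left identity; right multiplication by `e` acts
with eigenvalue `γ₁, γ₂, γ₃` on `b, c, d` (the next three coordinates), `γ₄` on `P`, `γ₅` on
`U` and `γ₆` on the part of `A(V,S)` of degrees `≥ 2`; the multiplication table (D3) for
`b, c, d` (with `γ_{bc} = (γ₂ - γ₁)/(γ₂ - γ₃)`); products between `⟨b,c,d⟩` and `A(V,S)`
vanish, and products inside `A(V,S)` are those of `A(V,S)`. -/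
def mulD (hr : 1 < r) : Dspace K P U r S →ₗ[K] Dspace K P U r S →ₗ[K] Dspace K P U r S :=
  LinearMap.mk₂ K
    (fun x y =>
      (x.1 * y.1 + x.2.2.1 * y.2.2.2.1,
       x.1 * y.2.1 + gam 0 * (x.2.1 * y.1) +
         ((gam 1 - gam 0) / (gam 1 - gam 2)) * (x.2.1 * y.2.2.1) + x.2.2.1 * y.2.2.1,
       x.1 * y.2.2.1 + x.2.1 * y.2.2.1 + gam 1 * (x.2.2.1 * y.1) - x.2.2.1 * y.2.1,
       x.1 * y.2.2.2.1 + gam 2 * (x.2.2.2.1 * y.1) + x.2.2.2.1 * y.2.2.1,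
       x.1 • y.2.2.2.2 + (x.2.2.2.1 * y.2.1) • iotaP K P U r S p1 +
         (x.2.2.2.1 * y.2.2.2.1) • iotaP K P U r S p2 +
         y.1 • (gam 5 • x.2.2.2.2 + (gam 3 - gam 5) • aP K P U r S hr x.2.2.2.2 +
           (gam 4 - gam 5) • aU K P U r S hr x.2.2.2.2) +
         mulAVS K (P × U) r S hr x.2.2.2.2 y.2.2.2.2))
    (by
      intro m n q
      simp only [Prod.fst_add, Prod.snd_add, Prod.mk_add_mk, Prod.mk.injEq, map_add,
        LinearMap.add_apply, smul_add]
      refine ⟨by ring, by ring, by ring, by ring, by module⟩)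
    (by
      intro c m q
      simp only [Prod.smul_fst, Prod.smul_snd, Prod.smul_mk, smul_eq_mul, Prod.mk.injEq,
        map_smul, LinearMap.smul_apply, smul_add]
      refine ⟨by ring, by ring, by ring, by ring, by module⟩)
    (by
      intro m n q
      simp only [Prod.fst_add, Prod.snd_add, Prod.mk_add_mk, Prod.mk.injEq, map_add,
        LinearMap.add_apply, smul_add]
      refine ⟨by ring, by ring, by ring, by ring, by module⟩)
    (by
      intro c m q
      simp only [Prod.smul_fst, Prod.smul_snd, Prod.smul_mk, smul_eq_mul, Prod.mk.injEq,
        map_smul, LinearMap.smul_apply, smul_add]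
      refine ⟨by ring, by ring, by ring, by ring, by module⟩)

/-- The left identity `e` of the algebra `D(P, U, S, γ)`. -/
def eD : Dspace K P U r S := (1, 0, 0, 0, 0)

section AVS

variable (K V : Type*) [Field K] [AddCommGroup V] [Module K V]
  (r : ℕ) (S : Submodule K (⨂[K]^r V))

theorem piV_mk (hr : 1 < r) (x : ↥(Tplus K V)) :
    piV K V r S hr (Submodule.Quotient.mk x) = PiTensorProduct.subsingletonEquiv 0 (x.1 1) :=
  rfl

theorem piV_iotaAVS (hr : 1 < r) (v : V) : piV K V r S hr (iotaAVS K V r S v) = v := by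
  change PiTensorProduct.subsingletonEquiv 0
    (DirectSum.lof K ℕ (fun n => ⨂[K]^n V) 1 ((PiTensorProduct.subsingletonEquiv 0).symm v) 1) = v
  rw [DirectSum.lof_apply, LinearEquiv.apply_symm_apply]

theorem piV_mulAVS (hr : 1 < r) (x y : AVS K V r S) :
    piV K V r S hr (mulAVS K V r S hr x y) = 0 := by
  obtain ⟨x, rfl⟩ := Submodule.Quotient.mk_surjective _ x
  obtain ⟨y, rfl⟩ := Submodule.Quotient.mk_surjective _ y
  have h : (x.1 * y.1) 1 = 0 :=
    mul_comp_eq_zero K V (a := 1) (b := 1) (fun i hi => by interval_cases i; exact x.2)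
      (fun j hj => by interval_cases j; exact y.2) (by omega)
  rw [mulAVS_mk, piV_mk K V r S hr]
  exact (LinearEquiv.map_eq_zero_iff _).mpr h

theorem mk_eq_zero_of_forall_lt (x : ↥(Tplus K V)) (hx : ∀ i < r + 1, x.1 i = 0) :
    (Submodule.Quotient.mk x : AVS K V r S) = 0 :=
  (Submodule.Quotient.mk_eq_zero _).mpr
    ⟨by rw [hx r (by omega)]; exact S.zero_mem, fun i hi => hx i (by omega)⟩

/-- Each substitution `a ↦ s • a * a` at least doubles the lowest degree of `a`, and degrees
above `r` vanish in `A(V, S)`. -/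
theorem eq_zero_of_eq_smul_mulAVS_self (hr : 1 < r) {s : K} {a : AVS K V r S}
    (hpa : piV K V r S hr a = 0) (ha : a = s • mulAVS K V r S hr a a) : a = 0 := by
  have lift : ∀ n : ℕ, ∃ x : ↥(Tplus K V),
      Submodule.Quotient.mk x = a ∧ ∀ i < n + 2, x.1 i = 0 := by
    intro n
    induction n with
    | zero =>
      obtain ⟨x, rfl⟩ := Submodule.Quotient.mk_surjective _ a
      rw [piV_mk K V r S hr, LinearEquiv.map_eq_zero_iff] at hpa
      refine ⟨x, rfl, fun i hi => ?_⟩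
      interval_cases i
      exacts [x.2, hpa]
    | succ n ih =>
      obtain ⟨x, rfl, hx⟩ := ih
      refine ⟨s • mulTplus K V x x, ?_, fun i hi => ?_⟩
      · rw [Submodule.Quotient.mk_smul, ← mulAVS_mk K V r S hr, ← ha]
      · change s • (x.1 * x.1) i = 0
        rw [mul_comp_eq_zero K V hx hx (by omega), smul_zero]
  obtain ⟨x, rfl, hx⟩ := lift r
  exact mk_eq_zero_of_forall_lt K V r S x fun i hi => hx i (by omega)

theorem eq_zero_of_mulAVS_self_eq_smul (hr : 1 < r) {s : K} (hs : s ≠ 0) {a : AVS K V r S}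
    (ha : mulAVS K V r S hr a a = s • a) : a = 0 := by
  have hpa : piV K V r S hr a = 0 := by
    rw [← inv_smul_smul₀ hs (piV K V r S hr a), ← map_smul, ← ha, piV_mulAVS K V r S hr, smul_zero]
  refine eq_zero_of_eq_smul_mulAVS_self K V r S hr hpa (s := s⁻¹) ?_
  rw [ha, inv_smul_smul₀ hs]

end AVS

section D

variable {K P U : Type*} [Field K] [AddCommGroup P] [Module K P] [AddCommGroup U] [Module K U]
  {r : ℕ} {S : Submodule K (⨂[K]^r (P × U))}

theorem piV_aP (hr : 1 < r) (a : AVS K (P × U) r S) :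
    piV K (P × U) r S hr (aP K P U r S hr a) = ((piV K (P × U) r S hr a).1, 0) :=
  piV_iotaAVS K (P × U) r S hr ((piV K (P × U) r S hr a).1, 0)

theorem piV_aU (hr : 1 < r) (a : AVS K (P × U) r S) :
    piV K (P × U) r S hr (aU K P U r S hr a) = (0, (piV K (P × U) r S hr a).2) :=
  piV_iotaAVS K (P × U) r S hr (0, (piV K (P × U) r S hr a).2)

/-- On degree-one parts `(p, u) ∈ P × U` the hypothesis reads `g4 • p = 0`, `g5 • u = 0`; once
they vanish, it reads `a * a = -g6 • a`. -/
theorem eq_zero_of_smul_add_aP_add_aU_add_mulAVS_self_eq_zero (hr : 1 < r) {g4 g5 g6 : K}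
    (hg4 : g4 ≠ 0) (hg5 : g5 ≠ 0) (hg6 : g6 ≠ 0) {a : AVS K (P × U) r S}
    (ha : g6 • a + (g4 - g6) • aP K P U r S hr a + (g5 - g6) • aU K P U r S hr a +
      mulAVS K (P × U) r S hr a a = 0) : a = 0 := by
  have hpa : piV K (P × U) r S hr a = 0 := by
    have h := congrArg (piV K (P × U) r S hr) ha
    simp only [map_add, map_smul, piV_aP, piV_aU, piV_mulAVS K (P × U) r S hr, map_zero,
      add_zero, Prod.ext_iff, Prod.fst_add, Prod.snd_add, Prod.smul_fst, Prod.smul_snd,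
      Prod.fst_zero, Prod.snd_zero, smul_zero, ← add_smul, add_sub_cancel, smul_eq_zero, hg4, hg5,
      false_or] at h
    exact Prod.ext h.1 h.2
  have haP : aP K P U r S hr a = 0 := by
    change iotaP K P U r S (piV K (P × U) r S hr a).1 = 0
    rw [hpa, Prod.fst_zero, map_zero]
  have haU : aU K P U r S hr a = 0 := by
    change iotaU K P U r S (piV K (P × U) r S hr a).2 = 0
    rw [hpa, Prod.snd_zero, map_zero]
  refine eq_zero_of_mulAVS_self_eq_smul K (P × U) r S hr (neg_ne_zero.mpr hg6) ?_
  simp only [haP, haU, smul_zero, add_zero, add_eq_zero_iff_eq_neg'] at ha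
  rw [ha, neg_smul]

end D

-- `h1`–`h4` are the `e`-, `b`-, `c`- and `d`-coordinates of `x * x = x` for
-- `x = t e + b b + c c + d d + a`, with `g1, g2, g3 = γ₁, γ₂, γ₃`.
theorem c_coord_eq_zero_of_mul_self_eq_self {K : Type*} [Field K] {g1 g2 g3 t b c d : K}
    (hg2 : g2 ≠ 0) (hg23 : g2 ≠ g3)
    (h1 : t * t + c * d = t)
    (h2 : t * b + g1 * (b * t) + (g2 - g1) / (g2 - g3) * (b * c) + c * c = b)
    (h3 : t * c + b * c + g2 * (c * t) - c * b = c)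
    (h4 : t * d + g3 * (d * t) + d * c = d) : c = 0 := by
  by_contra hc
  have hg23' : g2 - g3 ≠ 0 := sub_ne_zero.mpr hg23
  have ht : t * (1 + g2) = 1 :=
    eq_of_sub_eq_zero ((mul_eq_zero.mp (by linear_combination h3)).resolve_right hc)
  have hcd : c * d ≠ 0 := by
    intro h
    rcases mul_eq_zero.mp (show t * (t - 1) = 0 by linear_combination h1 - h) with h | h
    · simp [h] at ht
    · exact hg2 (by linear_combination ht - (1 + g2) * h)
  have hc' : c = t * (g2 - g3) := by
    have h : (c - t * (g2 - g3)) * d = 0 := by linear_combination h4 - d * ht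
    exact eq_of_sub_eq_zero ((mul_eq_zero.mp h).resolve_right (right_ne_zero_of_mul hcd))
  -- `t (1 + g1) - 1 = t (g1 - g2)` and `γ_bc c = t (g2 - g1)` cancel in `h2`, leaving `c * c = 0`.
  have hγbc : (g2 - g1) / (g2 - g3) * c = t * (g2 - g1) := by
    rw [hc']
    field_simp
  exact hc (mul_self_eq_zero.mp (by linear_combination h2 - b * hγbc - b * ht))

theorem scalar_coords_of_mul_self_eq_self {K : Type*} [Field K] {g1 g2 g3 t b c d : K}
    (hg1 : g1 ≠ 0) (hg2 : g2 ≠ 0) (hg3 : g3 ≠ 0) (hg23 : g2 ≠ g3)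
    (h1 : t * t + c * d = t)
    (h2 : t * b + g1 * (b * t) + (g2 - g1) / (g2 - g3) * (b * c) + c * c = b)
    (h3 : t * c + b * c + g2 * (c * t) - c * b = c)
    (h4 : t * d + g3 * (d * t) + d * c = d) : b = 0 ∧ c = 0 ∧ d = 0 ∧ (t = 0 ∨ t = 1) := by
  obtain rfl := c_coord_eq_zero_of_mul_self_eq_self hg2 hg23 h1 h2 h3 h4
  have ht : t * t = t := by simpa using h1
  rcases IsIdempotentElem.iff_eq_zero_or_one.mp ht with rfl | rfl
  · exact ⟨by simpa using h2.symm, rfl, by simpa using h4.symm, .inl rfl⟩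
  · refine ⟨?_, rfl, ?_, .inr rfl⟩
    · simpa [hg1] using (show g1 * b = 0 by linear_combination h2)
    · simpa [hg3] using (show g3 * d = 0 by linear_combination h4)

theorem idempotents_of_D
    (hγ0 : ∀ i, gam i ≠ 0) (hγinj : Function.Injective gam)
    (x : Dspace K P U r S) (hx : mulD K P U r S p1 p2 gam hr x x = x) :
    x = 0 ∨ x = eD K P U r S := by
  obtain ⟨t, b, c, d, a⟩ := x
  simp only [mulD, LinearMap.mk₂_apply, Prod.mk.injEq] at hx
  obtain ⟨h1, h2, h3, h4, h5⟩ := hx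
  obtain ⟨rfl, rfl, rfl, rfl | rfl⟩ :=
    scalar_coords_of_mul_self_eq_self (hγ0 0) (hγ0 1) (hγ0 2) (hγinj.ne (by decide)) h1 h2 h3 h4
  · simp only [zero_smul, zero_mul, zero_add] at h5
    rw [eq_zero_of_mulAVS_self_eq_smul K (P × U) r S hr one_ne_zero (h5.trans (one_smul K a).symm)]
    exact .inl rfl
  · simp only [one_smul, zero_mul, zero_smul, add_zero, add_assoc a, add_eq_left] at h5
    rw [eq_zero_of_smul_add_aP_add_aU_add_mulAVS_self_eq_zero hr (hγ0 3) (hγ0 4) (hγ0 5) h5]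
    exact .inr rfl
end
end

section
/- Let K be an algebraically closed field, n ≥ 1, U := K^n, and M a submonoid of the multiplicative monoid End_K(U) (equivalently, of n×n matrices over K) whose underlying set is Zariski closed, i.e., the common zero locus of a set of polynomials in the matrix entries. Let P := K² be a 2-dimensional K-vector space. Then there exists an integer r > 1 and a linear subspace S of the r-th tensor power (P ⊕ U)^{⊗r} such that {g ∈ End_K(U) | (id_P ⊕ g)^{⊗r}(S) ⊆ S} = M. -/
/-!
Let `J` be the ideal of polynomials in the matrix entries that vanish on `M`; as `M` is Zariski
closed, it is the zero locus of `J`. Sending `⊗ₛ (pₛ, uₛ)` to the polynomial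
`x ↦ ∏ₛ (pₛ 0 + (x uₛ)_{ρ s})` is a linear map `π : (P ⊕ U)^{⊗r} → K[x]` intertwining
`(id_P ⊕ g)^{⊗r}` with the right translation `f ↦ f (· * g)`, and with enough slots for every row
its image contains all polynomials of degree `≤ d`, in particular a finite generating set of `J`.
Take `S = π⁻¹ J`. Right translation by `g ∈ M` preserves `J` because `M` is a monoid. Conversely,
if `g` stabilizes `S`, every generator `f` has `f (· * g) ∈ J`; evaluating at `1` gives `f g = 0`,
so `g` lies in the zero locus of `J`, which is `M`.
-/

open scoped TensorProduct

open MvPolynomial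

namespace MatrixMonoidNormalizer

variable {K : Type*} [Field K] {n : ℕ}

def coords (g : Module.End K (Fin n → K)) : Fin n × Fin n → K :=
  fun ij => LinearMap.toMatrix' g ij.1 ij.2

/-- The comorphism `f ↦ f (· * g)` of right multiplication by `g`. -/
noncomputable def rightTranslate (g : Module.End K (Fin n → K)) :
    MvPolynomial (Fin n × Fin n) K →ₐ[K] MvPolynomial (Fin n × Fin n) K :=
  aeval fun ij => ∑ k, X (ij.1, k) * C (coords g (k, ij.2))

lemma eval_rightTranslate (g h : Module.End K (Fin n → K)) (f : MvPolynomial (Fin n × Fin n) K) :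
    eval (coords h) (rightTranslate g f) = eval (coords (h * g)) f := by
  have : (aeval (coords h)).comp (rightTranslate g) = aeval (coords (h * g)) := by
    ext ij
    simp [-LinearMap.toMatrix'_apply, rightTranslate, coords, LinearMap.toMatrix'_mul,
      Matrix.mul_apply]
  simpa [coe_aeval_eq_eval] using DFunLike.congr_fun this f

noncomputable def matrixVanishingIdeal (M : Submonoid (Module.End K (Fin n → K))) :
    Ideal (MvPolynomial (Fin n × Fin n) K) :=
  vanishingIdeal K (coords '' (M : Set (Module.End K (Fin n → K))))

lemma mem_matrixVanishingIdeal {M : Submonoid (Module.End K (Fin n → K))}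
    {f : MvPolynomial (Fin n × Fin n) K} :
    f ∈ matrixVanishingIdeal M ↔ ∀ m ∈ M, eval (coords m) f = 0 := by
  simp [matrixVanishingIdeal]

lemma rightTranslate_mem_matrixVanishingIdeal {M : Submonoid (Module.End K (Fin n → K))}
    {g : Module.End K (Fin n → K)} (hg : g ∈ M) {f : MvPolynomial (Fin n × Fin n) K}
    (hf : f ∈ matrixVanishingIdeal M) :
    rightTranslate g f ∈ matrixVanishingIdeal M := by
  rw [mem_matrixVanishingIdeal] at hf ⊢
  intro m hm
  rw [eval_rightTranslate]
  exact hf _ (M.mul_mem hm hg)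

lemma mem_of_rightTranslate_mem_matrixVanishingIdeal {M : Submonoid (Module.End K (Fin n → K))}
    {P : Set (MvPolynomial (Fin n × Fin n) K)}
    (hM : (M : Set (Module.End K (Fin n → K))) = {g | ∀ p ∈ P, eval (coords g) p = 0})
    {T : Set (MvPolynomial (Fin n × Fin n) K)} (hT : Ideal.span T = matrixVanishingIdeal M)
    {g : Module.End K (Fin n → K)} (hg : ∀ f ∈ T, rightTranslate g f ∈ matrixVanishingIdeal M) :
    g ∈ M := by
  have hker : matrixVanishingIdeal M ≤ RingHom.ker (eval (coords g)) := by
    rw [← hT, Ideal.span_le]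
    intro f hf
    simpa [eval_rightTranslate] using mem_matrixVanishingIdeal.1 (hg f hf) 1 M.one_mem
  have hP : ∀ p ∈ P, p ∈ matrixVanishingIdeal M := fun p hp =>
    mem_matrixVanishingIdeal.2 fun m hm => by
      rw [← SetLike.mem_coe, hM] at hm
      exact hm p hp
  rw [← SetLike.mem_coe, hM]
  exact fun p hp => hker (hP p hp)

/-- `(p, u) ↦ p 0 + (x u)ᵢ`, with `x` the generic matrix. -/
noncomputable def rowForm (i : Fin n) :
    ((Fin 2 → K) × (Fin n → K)) →ₗ[K] MvPolynomial (Fin n × Fin n) K :=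
  ((LinearMap.proj 0).smulRight 1).coprod (Fintype.linearCombination K fun j => X (i, j))

lemma rowForm_apply (i : Fin n) (v : (Fin 2 → K) × (Fin n → K)) :
    rowForm i v = v.1 0 • 1 + ∑ j, v.2 j • X (i, j) := by
  simp [rowForm, Fintype.linearCombination_apply]

lemma rowForm_comp_prodMap (i : Fin n) (g : Module.End K (Fin n → K)) :
    rowForm i ∘ₗ LinearMap.id.prodMap g = (rightTranslate g).toLinearMap ∘ₗ rowForm i := by
  ext j : 3
  · simp [rowForm_apply]
  · simp [rowForm_apply, rightTranslate, coords, Pi.single_apply, ← C_mul', mul_comm]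

variable {ι : Type*} [Fintype ι]

noncomputable def rowFormProduct (ρ : ι → Fin n) :
    (⨂[K] _ : ι, (Fin 2 → K) × (Fin n → K)) →ₗ[K] MvPolynomial (Fin n × Fin n) K :=
  PiTensorProduct.lift
    ((MultilinearMap.mkPiAlgebra K ι _).compLinearMap fun s => rowForm (ρ s))

lemma rowFormProduct_tprod (ρ : ι → Fin n) (v : ι → (Fin 2 → K) × (Fin n → K)) :
    rowFormProduct ρ (PiTensorProduct.tprod K v) = ∏ s, rowForm (ρ s) (v s) := by
  simp [rowFormProduct]

lemma rowFormProduct_map_prodMap (ρ : ι → Fin n) (g : Module.End K (Fin n → K))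
    (w : ⨂[K] _ : ι, (Fin 2 → K) × (Fin n → K)) :
    rowFormProduct ρ (PiTensorProduct.map
        (fun _ => (LinearMap.id : (Fin 2 → K) →ₗ[K] (Fin 2 → K)).prodMap g) w) =
      rightTranslate g (rowFormProduct ρ w) := by
  have : rowFormProduct ρ ∘ₗ PiTensorProduct.map (fun _ => LinearMap.id.prodMap g) =
      (rightTranslate g).toLinearMap ∘ₗ rowFormProduct ρ := by
    refine PiTensorProduct.ext (MultilinearMap.ext fun v => ?_)
    simp only [LinearMap.compMultilinearMap_apply, LinearMap.comp_apply,
      PiTensorProduct.map_tprod, rowFormProduct_tprod, AlgHom.toLinearMap_apply, map_prod]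
    exact Finset.prod_congr rfl fun s _ => LinearMap.congr_fun (rowForm_comp_prodMap (ρ s) g) (v s)
  exact LinearMap.congr_fun this w

lemma monomial_one_mem_range_rowFormProduct {d : ℕ} (e : ι ≃ (Fin n × Fin n) × Fin d)
    (u : Fin n × Fin n →₀ ℕ) (hu : ∀ ij, u ij ≤ d) :
    monomial u 1 ∈ LinearMap.range (rowFormProduct (K := K) fun s => (e s).1.1) := by
  classical
  let v : (Fin n × Fin n) × Fin d → (Fin 2 → K) × (Fin n → K) := fun x =>
    if (x.2 : ℕ) < u x.1 then (0, Pi.single x.1.2 1) else (Pi.single 0 1, 0)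
  have hv : ∀ ij t, rowForm ij.1 (v (ij, t)) = if (t : ℕ) < u ij then X ij else 1 := by
    intro ij t
    by_cases h : (t : ℕ) < u ij <;> simp [v, h, rowForm_apply, Pi.single_apply]
  refine ⟨PiTensorProduct.tprod K (v ∘ e), ?_⟩
  calc rowFormProduct (fun s => (e s).1.1) (PiTensorProduct.tprod K (v ∘ e))
      = ∏ x, rowForm x.1.1 (v x) := by
        rw [rowFormProduct_tprod]; exact e.prod_comp fun x => rowForm x.1.1 (v x)
    _ = ∏ ij, X ij ^ u ij := by
        rw [Fintype.prod_prod_type]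
        refine Finset.prod_congr rfl fun ij _ => ?_
        simp only [hv, Finset.prod_ite, Finset.prod_const, one_pow, mul_one,
          Fin.card_filter_val_lt, min_eq_right (hu ij)]
    _ = monomial u 1 := by
        rw [monomial_eq, C_1, one_mul, Finsupp.prod_fintype _ _ fun _ => pow_zero _]

lemma mem_range_rowFormProduct_of_totalDegree_le {d : ℕ} (e : ι ≃ (Fin n × Fin n) × Fin d)
    {f : MvPolynomial (Fin n × Fin n) K} (hf : f.totalDegree ≤ d) :
    f ∈ LinearMap.range (rowFormProduct fun s => (e s).1.1) := by
  rw [f.as_sum]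
  refine Submodule.sum_mem _ fun u hu => ?_
  rw [← mul_one (coeff u f), ← smul_eq_mul, ← smul_monomial]
  exact Submodule.smul_mem _ _ <| monomial_one_mem_range_rowFormProduct e u fun ij =>
    (monomial_le_degreeOf ij hu).trans ((degreeOf_le_totalDegree f ij).trans hf)

end MatrixMonoidNormalizer

open MatrixMonoidNormalizer

theorem zariski_closed_submonoid_as_tensor_normalizer_general
    (K : Type*) [Field K] (n : ℕ) (hn : 1 ≤ n)
    (M : Submonoid (Module.End K (Fin n → K)))
    (hM : ∃ P : Set (MvPolynomial (Fin n × Fin n) K),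
      (M : Set (Module.End K (Fin n → K))) =
        {g | ∀ p ∈ P,
          MvPolynomial.eval (fun ij => LinearMap.toMatrix' g ij.1 ij.2) p = 0}) :
    ∃ r : ℕ, 1 < r ∧
      ∃ S : Submodule K (⨂[K]^r ((Fin 2 → K) × (Fin n → K))),
        {g : Module.End K (Fin n → K) |
            ∀ s ∈ S,
              PiTensorProduct.map
                (fun _ : Fin r =>
                  ((LinearMap.id : (Fin 2 → K) →ₗ[K] (Fin 2 → K)).prodMap g)) s ∈ S} =
          (M : Set (Module.End K (Fin n → K))) := by
  obtain ⟨P, hP⟩ := hM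
  set J := matrixVanishingIdeal M
  obtain ⟨T, hT⟩ := IsNoetherian.noetherian J
  -- the `+ 2` only serves to make `r > 1`
  let d := T.sup totalDegree + 2
  let e := (Fintype.equivFin ((Fin n × Fin n) × Fin d)).symm
  refine ⟨Fintype.card ((Fin n × Fin n) × Fin d), ?_,
    (J.restrictScalars K).comap (rowFormProduct fun s => (e s).1.1), ?_⟩
  · simp only [Fintype.card_prod, Fintype.card_fin]
    exact lt_of_lt_of_le (by omega) (Nat.le_mul_of_pos_left d (Nat.mul_pos hn hn))
  ext g
  simp only [Set.mem_ofPred_eq, Submodule.mem_comap, Submodule.restrictScalars_mem,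
    rowFormProduct_map_prodMap]
  refine ⟨fun hg => mem_of_rightTranslate_mem_matrixVanishingIdeal hP hT fun f hf => ?_,
    fun hg w hw => rightTranslate_mem_matrixVanishingIdeal hg hw⟩
  obtain ⟨w, rfl⟩ := mem_range_rowFormProduct_of_totalDegree_le e (f := f)
    ((T.le_sup hf).trans (by omega))
  exact hg w (hT ▸ Submodule.subset_span hf)

/-- For any Zariski closed submonoid `M` of `End_K(U)` (`U = K^n`), there are an integer `r > 1`
and a subspace `S` of the tensor power `(P ⊕ U)^{⊗r}` (`P = K²`) such that the normalizer
`{g ∈ End_K(U) | (id_P ⊕ g)^{⊗r}(S) ⊆ S}` is exactly `M`. -/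
theorem zariski_closed_submonoid_as_tensor_normalizer
    (K : Type*) [Field K] [IsAlgClosed K] (n : ℕ) (hn : 1 ≤ n)
    (M : Submonoid (Module.End K (Fin n → K)))
    (hM : ∃ P : Set (MvPolynomial (Fin n × Fin n) K),
      (M : Set (Module.End K (Fin n → K))) =
        {g | ∀ p ∈ P,
          MvPolynomial.eval (fun ij => LinearMap.toMatrix' g ij.1 ij.2) p = 0}) :
    ∃ r : ℕ, 1 < r ∧
      ∃ S : Submodule K (⨂[K]^r ((Fin 2 → K) × (Fin n → K))),
        {g : Module.End K (Fin n → K) |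
            ∀ s ∈ S,
              PiTensorProduct.map
                (fun _ : Fin r =>
                  ((LinearMap.id : (Fin 2 → K) →ₗ[K] (Fin 2 → K)).prodMap g)) s ∈ S} =
          (M : Set (Module.End K (Fin n → K))) :=
  zariski_closed_submonoid_as_tensor_normalizer_general K n hn M hM
end

section
/- Let K be an algebraically closed field, n ≥ 1, and M a submonoid of the multiplicative monoid of n×n matrices over K whose underlying set is Zariski closed (the common zero locus of a set of polynomials in the matrix entries). Let the matrix monoid act on the ring K[X_{ij}] of polynomial functions on matrices by (g · f)(u) := f(u·g). Then there exists a finite-dimensional K-linear subspace W of K[X_{ij}] such that {g an n×n matrix | g · W ⊆ W} = M. -/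
open MvPolynomial

/-- The action of an `n × n` matrix `g` on a polynomial function `f` on matrices, given by
`(g · f)(u) = f(u · g)`, i.e. obtained from `f` by substituting `X_{ij} ↦ ∑ k, X_{ik} g_{kj}`. -/
noncomputable def matrixAct {K : Type*} [CommSemiring K] {n : ℕ}
    (g : Matrix (Fin n) (Fin n) K) (f : MvPolynomial (Fin n × Fin n) K) :
    MvPolynomial (Fin n × Fin n) K :=
  aeval (fun ij : Fin n × Fin n => ∑ k : Fin n, X (ij.1, k) * C (g k ij.2)) f

/-- `aeval` at polynomials of total degree `≤ 1` does not increase total degree. -/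
lemma totalDegree_aeval_le_of_le_one {K : Type*} [CommSemiring K] {σ : Type*}
    (φ : σ → MvPolynomial σ K) (hφ : ∀ i, (φ i).totalDegree ≤ 1)
    (f : MvPolynomial σ K) : (aeval φ f).totalDegree ≤ f.totalDegree := by
  conv_lhs => rw [f.as_sum]
  rw [map_sum]
  refine (totalDegree_finset_sum _ _).trans (Finset.sup_le fun s hs => ?_)
  rw [aeval_monomial]
  refine (totalDegree_mul _ _).trans ?_
  have h1 : (algebraMap K (MvPolynomial σ K) (coeff s f)).totalDegree = 0 :=
    totalDegree_C _
  rw [h1, zero_add]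
  have h2 : (s.prod fun i k => φ i ^ k).totalDegree ≤ s.sum fun _ e => e := by
    refine (totalDegree_finset_prod _ _).trans ?_
    rw [Finsupp.sum]
    refine Finset.sum_le_sum fun i _ => ?_
    calc (φ i ^ s i).totalDegree ≤ s i * (φ i).totalDegree := totalDegree_pow _ _
      _ ≤ s i * 1 := Nat.mul_le_mul_left _ (hφ i)
      _ = s i := Nat.mul_one _
  exact h2.trans (le_totalDegree hs)

/-- Evaluating `matrixAct g f` at `u` is evaluating `f` at `u * g`. -/
lemma eval_matrixAct {K : Type*} [CommSemiring K] {n : ℕ}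
    (g u : Matrix (Fin n) (Fin n) K) (f : MvPolynomial (Fin n × Fin n) K) :
    eval (fun ij : Fin n × Fin n => u ij.1 ij.2) (matrixAct g f) =
      eval (fun ij : Fin n × Fin n => (u * g) ij.1 ij.2) f := by
  have := comp_aeval_apply
    (f := fun ij : Fin n × Fin n => ∑ k : Fin n, X (ij.1, k) * C (g k ij.2))
    (φ := (aeval (fun ij : Fin n × Fin n => u ij.1 ij.2) :
      MvPolynomial (Fin n × Fin n) K →ₐ[K] K)) (p := f)
  show (aeval (fun ij : Fin n × Fin n => u ij.1 ij.2) :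
      MvPolynomial (Fin n × Fin n) K →ₐ[K] K) (matrixAct g f) =
    (aeval (fun ij : Fin n × Fin n => (u * g) ij.1 ij.2) :
      MvPolynomial (Fin n × Fin n) K →ₐ[K] K) f
  rw [show matrixAct g f =
      aeval (fun ij : Fin n × Fin n => ∑ k : Fin n, X (ij.1, k) * C (g k ij.2)) f from rfl]
  rw [this]
  have hfun : (fun i : Fin n × Fin n =>
      (aeval fun ij : Fin n × Fin n => u ij.1 ij.2) (∑ k : Fin n, X (i.1, k) * C (g k i.2))) =
      fun ij : Fin n × Fin n => (u * g) ij.1 ij.2 := by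
    funext ij
    simp [Matrix.mul_apply]
  rw [hfun]

/-- For a Zariski closed submonoid `M` of the monoid of `n × n` matrices, there is a
finite-dimensional subspace `W` of the ring of polynomial functions on matrices (with the
action `(g · f)(u) = f(u · g)`) whose stabilizer `{g | g · W ⊆ W}` is exactly `M`. -/
theorem zariski_closed_submonoid_as_stabilizer
    (K : Type*) [Field K] [IsAlgClosed K] (n : ℕ) (hn : 1 ≤ n)
    (M : Submonoid (Matrix (Fin n) (Fin n) K))
    (hM : ∃ P : Set (MvPolynomial (Fin n × Fin n) K),
      (M : Set (Matrix (Fin n) (Fin n) K)) =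
        {m | ∀ p ∈ P, eval (fun ij => m ij.1 ij.2) p = 0}) :
    ∃ W : Submodule K (MvPolynomial (Fin n × Fin n) K),
      FiniteDimensional K W ∧
      {g : Matrix (Fin n) (Fin n) K | ∀ f ∈ W, matrixAct g f ∈ W} =
        (M : Set (Matrix (Fin n) (Fin n) K)) := by
  classical
  obtain ⟨P, hP⟩ := hM
  -- the vanishing ideal of M
  set I : Ideal (MvPolynomial (Fin n × Fin n) K) :=
    { carrier := {f | ∀ m ∈ M, eval (fun ij : Fin n × Fin n => m ij.1 ij.2) f = 0}
      add_mem' := fun hf hg m hm => by simp [hf m hm, hg m hm]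
      zero_mem' := fun m hm => by simp
      smul_mem' := fun r f hf m hm => by
        simp [smul_eq_mul, hf m hm] } with hI
  have memI : ∀ f, f ∈ I ↔
      ∀ m ∈ M, eval (fun ij : Fin n × Fin n => m ij.1 ij.2) f = 0 := fun f => Iff.rfl
  -- P ⊆ I
  have hPI : P ⊆ (I : Set (MvPolynomial (Fin n × Fin n) K)) := by
    intro p hp m hm
    have : m ∈ (M : Set (Matrix (Fin n) (Fin n) K)) := hm
    rw [hP] at this
    exact this p hp
  -- the zero locus of I is exactly M
  have hVI : ∀ g : Matrix (Fin n) (Fin n) K,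
      (∀ f ∈ I, eval (fun ij : Fin n × Fin n => g ij.1 ij.2) f = 0) → g ∈ M := by
    intro g hg
    have : g ∈ (M : Set (Matrix (Fin n) (Fin n) K)) := by
      rw [hP]
      exact fun p hp => hg p (hPI hp)
    exact this
  -- I is finitely generated
  obtain ⟨S, hS⟩ : I.FG := IsNoetherian.noetherian I
  -- degree bound
  set d : ℕ := S.sup totalDegree with hd
  set W : Submodule K (MvPolynomial (Fin n × Fin n) K) :=
    (I.restrictScalars K) ⊓ restrictTotalDegree (Fin n × Fin n) K d with hW
  have memW : ∀ f, f ∈ W ↔ f ∈ I ∧ f.totalDegree ≤ d := by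
    intro f
    rw [hW, Submodule.mem_inf, mem_restrictTotalDegree]
    rfl
  refine ⟨W, ?_, ?_⟩
  · exact Submodule.finiteDimensional_of_le inf_le_right
  · ext g
    simp only [Set.mem_setOf_eq, SetLike.mem_coe]
    constructor
    · -- stabilizer ⊆ M
      intro hg
      refine hVI g fun f hf => ?_
      -- it suffices to show S vanishes at g
      have hSg : ∀ s ∈ S, eval (fun ij : Fin n × Fin n => g ij.1 ij.2) s = 0 := by
        intro s hs
        have hsI : s ∈ I := by
          rw [← hS]; exact Ideal.subset_span hs
        have hsW : s ∈ W := (memW s).mpr ⟨hsI, Finset.le_sup hs⟩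
        have h1 : matrixAct g s ∈ W := hg s hsW
        have h2 : matrixAct g s ∈ I := ((memW _).mp h1).1
        have h3 := (memI _).mp h2 1 M.one_mem
        rw [eval_matrixAct] at h3
        simpa using h3
      -- hence all of I = span S vanishes at g
      have : I ≤ RingHom.ker (eval (fun ij : Fin n × Fin n => g ij.1 ij.2)) := by
        rw [← hS, Ideal.span_le]
        intro s hs
        exact hSg s hs
      exact this hf
    · -- M ⊆ stabilizer
      intro hg f hf
      obtain ⟨hfI, hfd⟩ := (memW f).mp hf
      refine (memW _).mpr ⟨?_, ?_⟩
      · intro m hm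
        rw [eval_matrixAct]
        exact hfI (m * g) (M.mul_mem hm hg)
      · refine le_trans ?_ hfd
        refine totalDegree_aeval_le_of_le_one _ (fun ij => ?_) f
        refine (totalDegree_finset_sum _ _).trans (Finset.sup_le fun k _ => ?_)
        refine (totalDegree_mul _ _).trans ?_
        simp [totalDegree_X]
end

section
/- Let K be a field, U a finite-dimensional K-vector space of dimension d ≥ 1, and let U^{⊕d} be the direct sum of d copies of U. Then there exists an injective K-linear map ι from the tensor algebra T(U^{⊕d}) to the tensor algebra T(K ⊕ U) which is End_K(U)-equivariant: for every g ∈ End_K(U), ι ∘ T(g^{⊕d}) = T(id_K ⊕ g) ∘ ι, where g^{⊕d} acts as g on each summand of U^{⊕d}, id_K ⊕ g is the endomorphism of K ⊕ U acting as the identity on K and as g on U, and T(h) denotes the algebra endomorphism of a tensor algebra induced functorially by a linear endomorphism h (acting as h^{⊗i} in each tensor degree i). -/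
/-!
Send the `j`-th copy of `v ∈ U` to `e ^ j * v` in `T(K ⊕ U)`, where `e = (1, 0)` spans `K`, and
extend multiplicatively. Since `id_K ⊕ g` fixes `e`, this commutes with the functorial actions.
In bases, the word in the letters `(j, uᵢ)` is sent to the word obtained by replacing each letter
by `e ^ j uᵢ`; every such block ends in its only letter different from `e`, so the blocks form a
prefix code, distinct words go to distinct words, and the map is injective.
-/

/-- The algebra endomorphism of a tensor algebra induced functorially by a linear map, acting as
`h^{⊗i}` in each tensor degree `i`. -/
noncomputable def mapTA {K : Type*} [CommSemiring K] {M N : Type*}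
    [AddCommMonoid M] [Module K M] [AddCommMonoid N] [Module K N] (h : M →ₗ[K] N) :
    TensorAlgebra K M →ₐ[K] TensorAlgebra K N :=
  TensorAlgebra.lift K ((TensorAlgebra.ι K).comp h)

open Function

theorem mapTA_ι {K : Type*} [CommSemiring K] {M N : Type*} [AddCommMonoid M] [Module K M]
    [AddCommMonoid N] [Module K N] (h : M →ₗ[K] N) (x : M) :
    mapTA h (TensorAlgebra.ι K x) = TensorAlgebra.ι K (h x) :=
  TensorAlgebra.lift_ι_apply _ _

theorem List.replicate_append_cons_inj {α : Type*} {a b b' : α} {s s' : List α} (hb : b ≠ a)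
    (hb' : b' ≠ a) {j j' : ℕ} (h : replicate j a ++ b :: s = replicate j' a ++ b' :: s') :
    j = j' ∧ b = b' ∧ s = s' := by
  induction j generalizing j' with
  | zero => cases j' <;> simp_all [replicate_succ, eq_comm]
  | succ j ih =>
    cases j' with
    | zero => simp_all [replicate_succ]
    | succ j' => simpa [replicate_succ] using ih (by simpa [replicate_succ] using h)

theorem List.flatMap_replicate_append_singleton_injective {α β : Type*} {a : β} {k : α → ℕ}
    {c : α → β} (hc : ∀ x, c x ≠ a) (hkc : Injective fun x => (k x, c x)) :
    Injective fun l : List α => l.flatMap fun x => replicate (k x) a ++ [c x] := by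
  intro l
  induction l with
  | nil => rintro (_ | _) h <;> simp_all
  | cons x t ih =>
    rintro (_ | ⟨y, t'⟩) h
    · simp at h
    · simp only [flatMap_cons, append_assoc, singleton_append] at h
      obtain ⟨hk, hxy, ht⟩ := replicate_append_cons_inj (hc x) (hc y) h
      rw [hkc (Prod.ext hk hxy), ih ht]

theorem FreeMonoid.lift_ofList_replicate_append_singleton_injective {α β : Type*} {a : β}
    {k : α → ℕ} {c : α → β} (hc : ∀ x, c x ≠ a) (hkc : Injective fun x => (k x, c x)) :
    Injective (lift fun x => ofList (List.replicate (k x) a ++ [c x])) := by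
  intro w w' h
  apply toList.injective
  apply List.flatMap_replicate_append_singleton_injective hc hkc
  simpa [lift_apply, toList_prod, List.flatMap_def, Function.comp_def] using congrArg toList h

theorem FreeAlgebra.lift_freeMonoidLift_injective (R : Type*) [CommSemiring R] {α β : Type*}
    {c : FreeMonoid α →* FreeMonoid β} (hc : Injective c) :
    Injective (lift R fun x => FreeMonoid.lift (ι R) (c (.of x))) := by
  have : lift R (fun x => FreeMonoid.lift (ι R) (c (.of x))) =
      (equivMonoidAlgebraFreeMonoid.symm.toAlgHom.comp (MonoidAlgebra.mapDomainAlgHom R R c)).comp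
        equivMonoidAlgebraFreeMonoid.toAlgHom := by
    ext x
    simp [equivMonoidAlgebraFreeMonoid]
  rw [this]
  exact equivMonoidAlgebraFreeMonoid.symm.injective.comp
    ((MonoidAlgebra.mapDomain_injective hc).comp equivMonoidAlgebraFreeMonoid.injective)

namespace TensorAlgebra

theorem equivFreeAlgebra_symm_freeMonoidLift {R M κ : Type*} [CommSemiring R] [AddCommMonoid M]
    [Module R M] (b : Module.Basis κ R M) (w : FreeMonoid κ) :
    (equivFreeAlgebra b).symm (FreeMonoid.lift (FreeAlgebra.ι R) w) =
      FreeMonoid.lift (ι R ∘ b) w := by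
  induction w using FreeMonoid.inductionOn' with
  | one => simp
  | of_mul k w ih => simp [ih]

theorem injective_of_ι_basis_eq_freeMonoidLift {R M N κ μ : Type*} [CommSemiring R]
    [AddCommMonoid M] [Module R M] [AddCommMonoid N] [Module R N]
    (bM : Module.Basis κ R M) (bN : Module.Basis μ R N) {c : FreeMonoid κ →* FreeMonoid μ}
    (hc : Injective c) (f : TensorAlgebra R M →ₐ[R] TensorAlgebra R N)
    (hf : ∀ k, f (ι R (bM k)) = FreeMonoid.lift (ι R ∘ bN) (c (.of k))) :
    Injective f := by
  set F := FreeAlgebra.lift R fun k => FreeMonoid.lift (FreeAlgebra.ι R) (c (.of k))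
  have : f = ((equivFreeAlgebra bN).symm.toAlgHom.comp F).comp (equivFreeAlgebra bM).toAlgHom := by
    refine hom_ext (bM.ext fun k => ?_)
    simp [F, hf, equivFreeAlgebra_symm_freeMonoidLift]
  rw [this]
  exact (equivFreeAlgebra bN).symm.injective.comp
    ((FreeAlgebra.lift_freeMonoidLift_injective R hc).comp (equivFreeAlgebra bM).injective)

section
variable (K : Type*) [CommSemiring K] (U : Type*) [AddCommMonoid U] [Module K U] (d : ℕ)

noncomputable def piEmbedding : TensorAlgebra K (Fin d → U) →ₐ[K] TensorAlgebra K (K × U) :=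
  lift K <| ∑ j : Fin d, LinearMap.mulLeft K (ι K ((1 : K), (0 : U)) ^ (j : ℕ)) ∘ₗ
    ι K ∘ₗ LinearMap.inr K K U ∘ₗ LinearMap.proj j

variable {K U d}

theorem piEmbedding_ι (v : Fin d → U) :
    piEmbedding K U d (ι K v) =
      ∑ j : Fin d, ι K ((1 : K), (0 : U)) ^ (j : ℕ) * ι K (0, v j) := by
  simp [piEmbedding]

theorem piEmbedding_comp_mapTA {V : Type*} [AddCommMonoid V] [Module K V] (g : U →ₗ[K] V) :
    (piEmbedding K V d).comp (mapTA (g.compLeft (Fin d))) =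
      (mapTA (LinearMap.id.prodMap g)).comp (piEmbedding K U d) := by
  refine hom_ext (LinearMap.ext fun v => ?_)
  simp [piEmbedding_ι, mapTA_ι, map_sum]

theorem piEmbedding_injective [Module.Free K U] : Injective (piEmbedding K U d) := by
  set b := Module.Free.chooseBasis K U
  refine injective_of_ι_basis_eq_freeMonoidLift (Pi.basis fun _ : Fin d => b)
    ((Module.Basis.singleton Unit K).prod b)
    (FreeMonoid.lift_ofList_replicate_append_singleton_injective (a := Sum.inl ())
      (k := fun x => (x.1 : ℕ)) (c := fun x => Sum.inr x.2) (fun _ => Sum.inr_ne_inl) ?_) _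
    fun x => ?_
  · rintro ⟨j, i⟩ ⟨j', i'⟩ h
    simp only [Prod.mk.injEq, Fin.val_inj, Sum.inr.injEq] at h
    obtain ⟨rfl, rfl⟩ := h
    rfl
  · rw [Pi.basis_apply, piEmbedding_ι, Finset.sum_eq_single x.1
      (fun j _ hj => by simp [hj, Prod.mk_zero_zero]) (by simp)]
    simp

end

end TensorAlgebra

theorem tensorAlgebra_embedding_equivariant_general
    (K : Type*) [Field K] (U : Type*) [AddCommGroup U] [Module K U] (d : ℕ) :
    ∃ ι : TensorAlgebra K (Fin d → U) →ₗ[K] TensorAlgebra K (K × U),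
      Function.Injective ι ∧
      ∀ g : Module.End K U,
        ι ∘ₗ (mapTA (g.compLeft (Fin d))).toLinearMap =
          (mapTA ((LinearMap.id : K →ₗ[K] K).prodMap g)).toLinearMap ∘ₗ ι :=
  ⟨(TensorAlgebra.piEmbedding K U d).toLinearMap, TensorAlgebra.piEmbedding_injective,
    fun g => congrArg AlgHom.toLinearMap (TensorAlgebra.piEmbedding_comp_mapTA g)⟩

/-- For a `d`-dimensional space `U` (`d ≥ 1`), there is an injective linear map from the tensor
algebra of `U^{⊕d}` to the tensor algebra of `K ⊕ U` which is equivariant for the functorial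
`End_K(U)`-actions: `ι ∘ T(g^{⊕d}) = T(id_K ⊕ g) ∘ ι`. -/
theorem tensorAlgebra_embedding_equivariant
    (K : Type*) [Field K] (U : Type*) [AddCommGroup U] [Module K U]
    [FiniteDimensional K U] (d : ℕ) (hd : 1 ≤ d) (hdim : Module.finrank K U = d) :
    ∃ ι : TensorAlgebra K (Fin d → U) →ₗ[K] TensorAlgebra K (K × U),
      Function.Injective ι ∧
      ∀ g : Module.End K U,
        ι ∘ₗ (mapTA (g.compLeft (Fin d))).toLinearMap =
          (mapTA ((LinearMap.id : K →ₗ[K] K).prodMap g)).toLinearMap ∘ₗ ι :=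
  tensorAlgebra_embedding_equivariant_general K U d
end
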